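/- Recovering the maximum entropy ICE distribution from optimal dual weights: with σ, Φ, r, and the standard ICE polytope P as in the dual formulation, suppose θ* : Φ → ℝ^d attains the infimum of the dual objective θ ↦ Σ_{f∈Φ} max_{g∈Φ} ⟨r(g,σ), θ_f⟩ + log ( Σ_{a∈𝒜} exp( −Σ_{f∈Φ} ⟨r(f,a), θ_f⟩ ) ). Then the Gibbs distribution σ̂ defined by σ̂(a) = exp( −Σ_{f∈Φ} ⟨r(f,a), θ*_f⟩ ) / Σ_{a′∈𝒜} exp( −Σ_{f∈Φ} ⟨r(f,a′), θ*_f⟩ ) belongs to P and maximizes the Shannon entropy over P. -/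

import Mathlib

/-!
Weak duality `H(τ) ≤ dualObj θ` for every `τ ∈ P` and every `θ` combines the Gibbs variational
inequality `∑ τ y + H(τ) ≤ log ∑ exp y` (with equality at the softmax of `y`) with the bound of a
linear functional on a convex hull by its support function `h`. At an optimal `θ*`, perturb `θ*`
along a direction `η`: the log-partition term has derivative `-∑_f ⟨r(f, σ̂), η_f⟩`, and the
support-function term grows at most linearly since `h` is sublinear. Perturbing a single `θ*_f`
by `w` gives `⟨r(f, σ̂), w⟩ ≤ h(w)` for all `w`, so `σ̂ ∈ P` by Hahn–Banach; the direction `-θ*`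
gives complementary slackness `∑_f ⟨r(f, σ̂), θ*_f⟩ ≥ ∑_f h(θ*_f)`, so `H(σ̂)` reaches the dual
optimum.
-/

open scoped BigOperators

/-- Dot product on `ℝ^d`. -/
def dot {d : ℕ} (x w : Fin d → ℝ) : ℝ := ∑ k, x k * w k

/-- `σ` is a probability distribution on the finite set `A`. -/
def IsProb {A : Type} [Fintype A] (σ : A → ℝ) : Prop :=
  (∀ a, 0 ≤ σ a) ∧ ∑ a, σ a = 1

/-- Expected regret features of deviation `f` under distribution `σ`. -/
def expFeat {d : ℕ} {A Φ : Type} [Fintype A] (r : Φ → A → Fin d → ℝ)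
    (σ : A → ℝ) (f : Φ) : Fin d → ℝ := ∑ a, σ a • r f a

/-- Membership in the standard ICE polytope relative to `σ`. -/
def InICE {d : ℕ} {A Φ : Type} [Fintype A] (r : Φ → A → Fin d → ℝ)
    (σ σhat : A → ℝ) : Prop :=
  IsProb σhat ∧ ∀ f : Φ, expFeat r σhat f ∈ convexHull ℝ (Set.range (expFeat r σ))

/-- Shannon entropy `H(σ) = -∑ σ(a) log σ(a)` (with `0 log 0 = 0`). -/
noncomputable def shannonEntropy {A : Type} [Fintype A] (σ : A → ℝ) : ℝ :=
  -∑ a, σ a * Real.log (σ a)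

/-- The dual MaxEnt ICE objective. -/
noncomputable def dualObj {d : ℕ} {A Φ : Type} [Fintype A] [Fintype Φ]
    (r : Φ → A → Fin d → ℝ) (σ : A → ℝ) (θ : Φ → Fin d → ℝ) : ℝ :=
  (∑ f : Φ, ⨆ g : Φ, dot (expFeat r σ g) (θ f)) +
    Real.log (∑ a, Real.exp (-∑ f : Φ, dot (r f a) (θ f)))

open Finset Set Real

lemma dot_eq_dotProduct {d : ℕ} (x w : Fin d → ℝ) : dot x w = x ⬝ᵥ w := rfl

lemma dot_add_smul_right {d : ℕ} (x u w : Fin d → ℝ) (t : ℝ) :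
    dot x (u + t • w) = dot x u + t * dot x w := by
  simp [dot_eq_dotProduct, dotProduct_add, dotProduct_smul]

lemma isLinearMap_dot_left {d : ℕ} (w : Fin d → ℝ) : IsLinearMap ℝ fun x => dot x w :=
  ⟨fun x y => add_dotProduct x y w, fun c x => smul_dotProduct c x w⟩

section SupportFunction

variable {d : ℕ} {Φ : Type}

noncomputable def supportFn (v : Φ → Fin d → ℝ) (w : Fin d → ℝ) : ℝ :=
  ⨆ g, dot (v g) w

lemma dot_le_supportFn [Finite Φ] (v : Φ → Fin d → ℝ) (g : Φ) (w : Fin d → ℝ) :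
    dot (v g) w ≤ supportFn v w :=
  le_ciSup (f := fun g => dot (v g) w) (Finite.bddAbove_range _) g

lemma supportFn_smul (v : Φ → Fin d → ℝ) {s : ℝ} (hs : 0 ≤ s) (w : Fin d → ℝ) :
    supportFn v (s • w) = s * supportFn v w := by
  simp [supportFn, Real.mul_iSup_of_nonneg hs, dot_eq_dotProduct, dotProduct_smul]

lemma supportFn_zero (v : Φ → Fin d → ℝ) : supportFn v 0 = 0 := by
  simpa using supportFn_smul v le_rfl 0

lemma supportFn_add_smul_le [Finite Φ] [Nonempty Φ] (v : Φ → Fin d → ℝ) (u w : Fin d → ℝ) {t : ℝ}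
    (ht : 0 ≤ t) : supportFn v (u + t • w) ≤ supportFn v u + t * supportFn v w :=
  ciSup_le fun g => by
    rw [dot_add_smul_right]
    gcongr
    exacts [dot_le_supportFn v g u, dot_le_supportFn v g w]

lemma dot_le_supportFn_of_mem_convexHull [Finite Φ] (v : Φ → Fin d → ℝ) {x : Fin d → ℝ}
    (hx : x ∈ convexHull ℝ (range v)) (w : Fin d → ℝ) : dot x w ≤ supportFn v w := by
  refine convexHull_min ?_ (convex_halfSpace_le (isLinearMap_dot_left w) _) hx
  rintro _ ⟨g, rfl⟩
  exact dot_le_supportFn v g w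

lemma mem_convexHull_of_forall_dot_le_supportFn [Finite Φ] [Nonempty Φ] (v : Φ → Fin d → ℝ)
    {x : Fin d → ℝ} (hx : ∀ w, dot x w ≤ supportFn v w) : x ∈ convexHull ℝ (range v) := by
  by_contra hnot
  obtain ⟨L, u, hLx, hLv⟩ := geometric_hahn_banach_point_closed (convex_convexHull ℝ _)
    ((finite_range v).isCompact_convexHull ℝ |>.isClosed) hnot
  set w : Fin d → ℝ := fun k => -L fun j => if k = j then 1 else 0
  have hdot : ∀ y, dot y w = -L y := fun y => by
    have := LinearMap.pi_apply_eq_sum_univ L.toLinearMap y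
    simp only [ContinuousLinearMap.coe_coe, smul_eq_mul] at this
    simp [this, dot, w]
  have hsupp : supportFn v w ≤ -u := ciSup_le fun g => by
    rw [hdot]
    linarith [hLv _ (subset_convexHull ℝ _ (mem_range_self g))]
  linarith [hx w, hdot x]

end SupportFunction

lemma mul_sub_log_le_exp_sub {t : ℝ} (ht : 0 ≤ t) (y : ℝ) : t * (y - log t) ≤ exp y - t := by
  rcases ht.eq_or_lt with rfl | ht
  · simpa using (exp_pos y).le
  calc t * (y - log t) = t * log (exp y / t) := by rw [log_div (exp_pos y).ne' ht.ne', log_exp]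
    _ ≤ t * (exp y / t - 1) := by gcongr; exact log_le_sub_one_of_pos (by positivity)
    _ = exp y - t := by field_simp

section Softmax

variable {A : Type} [Fintype A]

noncomputable def softmax (y : A → ℝ) (a : A) : ℝ :=
  exp (y a) / ∑ b, exp (y b)

variable [Nonempty A]

lemma sum_exp_pos (y : A → ℝ) : 0 < ∑ a, exp (y a) :=
  sum_pos (fun a _ => exp_pos (y a)) univ_nonempty

lemma isProb_softmax (y : A → ℝ) : IsProb (softmax y) := by
  refine ⟨fun a => div_nonneg (exp_pos _).le (sum_exp_pos y).le, ?_⟩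
  simp only [softmax, ← sum_div, div_self (sum_exp_pos y).ne']

lemma log_softmax (y : A → ℝ) (a : A) :
    log (softmax y a) = y a - log (∑ b, exp (y b)) := by
  rw [softmax, log_div (exp_pos _).ne' (sum_exp_pos y).ne', log_exp]

lemma sum_mul_add_shannonEntropy_le {τ : A → ℝ} (hτ : IsProb τ) (y : A → ℝ) :
    ∑ a, τ a * y a + shannonEntropy τ ≤ log (∑ a, exp (y a)) := by
  have hZ := sum_exp_pos y
  -- apply the pointwise bound to `y - log ∑ exp y`, whose exponentials sum to one
  have key := sum_le_sum (s := Finset.univ) fun a _ =>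
    mul_sub_log_le_exp_sub (hτ.1 a) (y a - log (∑ b, exp (y b)))
  simp only [exp_sub, exp_log hZ, sum_sub_distrib, ← sum_div, div_self hZ.ne', hτ.2, mul_sub,
    ← sum_mul, one_mul] at key
  rw [shannonEntropy]
  linarith

lemma sum_softmax_mul_add_shannonEntropy (y : A → ℝ) :
    ∑ a, softmax y a * y a + shannonEntropy (softmax y) = log (∑ a, exp (y a)) := by
  simp only [shannonEntropy, log_softmax, mul_sub, sum_sub_distrib, ← sum_mul,
    (isProb_softmax y).2]
  ring

lemma hasDerivAt_log_sum_exp_add_mul (y z : A → ℝ) :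
    HasDerivAt (fun t => log (∑ a, exp (y a + t * z a))) (∑ a, softmax y a * z a) 0 := by
  have hsum : HasDerivAt (fun t => ∑ a, exp (y a + t * z a)) (∑ a, exp (y a) * z a) 0 := by
    simpa using HasDerivAt.fun_sum (u := Finset.univ)
      fun a _ => ((hasDerivAt_mul_const (x := 0) (z a)).const_add (y a)).exp
  convert hsum.log (by simpa using (sum_exp_pos y).ne') using 1
  simp [softmax, sum_div, div_mul_eq_mul_div]

end Softmax

lemma IsMinOn.hasDerivAt_nonneg_of_left {G : ℝ → ℝ} {a b G' : ℝ} (hab : a < b)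
    (hmin : IsMinOn G (Icc a b) a) (hG : HasDerivAt G G' a) : 0 ≤ G' := by
  have hcone : b - a ∈ posTangentConeAt (Icc a b) a :=
    sub_mem_posTangentConeAt_of_segment_subset (segment_eq_Icc hab.le).subset
  have := hmin.localize.hasFDerivWithinAt_nonneg hG.hasDerivWithinAt.hasFDerivWithinAt hcone
  simp only [ContinuousLinearMap.toSpanSingleton_apply, smul_eq_mul] at this
  exact nonneg_of_mul_nonneg_right this (sub_pos.2 hab)

lemma sum_apply_pi_single {ι M N : Type*} [Fintype ι] [DecidableEq ι] [Zero M] [AddCommMonoid N]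
    (F : ι → M → N) (hF : ∀ i, F i 0 = 0) (i : ι) (x : M) :
    ∑ j, F j (Pi.single (M := fun _ => M) i x j) = F i x :=
  (Fintype.sum_eq_single i fun j hj => by rw [Pi.single_eq_of_ne hj, hF]).trans (by simp)

lemma dot_expFeat {d : ℕ} {A Φ : Type} [Fintype A] (r : Φ → A → Fin d → ℝ) (τ : A → ℝ) (f : Φ)
    (w : Fin d → ℝ) : dot (expFeat r τ f) w = ∑ a, τ a * dot (r f a) w := by
  simp [dot_eq_dotProduct, expFeat, sum_dotProduct, smul_dotProduct]

section Gibbs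

variable {d : ℕ} {A Φ : Type} [Fintype Φ] (r : Φ → A → Fin d → ℝ)

def energy (θ : Φ → Fin d → ℝ) (a : A) : ℝ :=
  ∑ f, dot (r f a) (θ f)

lemma energy_add_smul (θ η : Φ → Fin d → ℝ) (t : ℝ) (a : A) :
    energy r (θ + t • η) a = energy r θ a + t * energy r η a := by
  simp only [energy, Pi.add_apply, Pi.smul_apply, dot_add_smul_right, sum_add_distrib, mul_sum]

variable [Fintype A]

noncomputable def gibbs (θ : Φ → Fin d → ℝ) : A → ℝ :=
  softmax fun a => -energy r θ a

lemma sum_mul_energy (τ : A → ℝ) (θ : Φ → Fin d → ℝ) :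
    ∑ a, τ a * energy r θ a = ∑ f, dot (expFeat r τ f) (θ f) := by
  simp only [energy, dot_expFeat, mul_sum]
  exact sum_comm

lemma dualObj_eq (σ : A → ℝ) (θ : Φ → Fin d → ℝ) :
    dualObj r σ θ =
      ∑ f, supportFn (expFeat r σ) (θ f) + log (∑ a, exp (-energy r θ a)) :=
  rfl

variable [Nonempty A]

lemma shannonEntropy_le_dualObj {σ τ : A → ℝ} (hτ : InICE r σ τ) (θ : Φ → Fin d → ℝ) :
    shannonEntropy τ ≤ dualObj r σ θ := by
  have hgibbs := sum_mul_add_shannonEntropy_le hτ.1 fun a => -energy r θ a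
  have hsupp : ∑ f, dot (expFeat r τ f) (θ f) ≤ ∑ f, supportFn (expFeat r σ) (θ f) :=
    sum_le_sum fun f _ => dot_le_supportFn_of_mem_convexHull _ (hτ.2 f) (θ f)
  simp only [mul_neg, sum_neg_distrib, sum_mul_energy] at hgibbs
  rw [dualObj_eq]
  linarith

lemma shannonEntropy_gibbs (θ : Φ → Fin d → ℝ) :
    shannonEntropy (gibbs r θ) =
      log (∑ a, exp (-energy r θ a)) + ∑ f, dot (expFeat r (gibbs r θ) f) (θ f) := by
  have := sum_softmax_mul_add_shannonEntropy fun a => -energy r θ a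
  simp only [mul_neg, sum_neg_distrib] at this
  rw [← sum_mul_energy, gibbs]
  linarith

lemma hasDerivAt_log_sum_exp_neg_energy_add_smul (θ η : Φ → Fin d → ℝ) :
    HasDerivAt (fun t : ℝ => log (∑ a, exp (-energy r (θ + t • η) a)))
      (-∑ f, dot (expFeat r (gibbs r θ) f) (η f)) 0 := by
  convert hasDerivAt_log_sum_exp_add_mul (fun a => -energy r θ a) (fun a => -energy r η a)
    using 1
  · ext t
    simp only [energy_add_smul, neg_add, mul_neg]
  · simp only [← sum_mul_energy, gibbs, mul_neg, sum_neg_distrib]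

lemma sum_dot_expFeat_gibbs_le {σ : A → ℝ} {θ : Φ → Fin d → ℝ}
    (hθ : ∀ θ', dualObj r σ θ ≤ dualObj r σ θ') (η : Φ → Fin d → ℝ) (c : Φ → ℝ)
    (hc : ∀ t ∈ Icc (0 : ℝ) 1, ∀ f,
      supportFn (expFeat r σ) (θ f + t • η f) ≤ supportFn (expFeat r σ) (θ f) + t * c f) :
    ∑ f, dot (expFeat r (gibbs r θ) f) (η f) ≤ ∑ f, c f := by
  set G : ℝ → ℝ := fun t => ∑ f, supportFn (expFeat r σ) (θ f) + t * ∑ f, c f +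
    log (∑ a, exp (-energy r (θ + t • η) a))
  -- `G` majorizes the dual objective along `θ + t • η` on `[0, 1]` and agrees with it at `0`
  have hmin : IsMinOn G (Icc 0 1) 0 := fun t ht => by
    calc G 0 = dualObj r σ θ := by simp [G, dualObj_eq]
      _ ≤ dualObj r σ (θ + t • η) := hθ _
      _ ≤ G t := by
        simp only [G, dualObj_eq, mul_sum, ← sum_add_distrib]
        gcongr with f
        exact hc t ht f
  have hG : HasDerivAt G (∑ f, c f + -∑ f, dot (expFeat r (gibbs r θ) f) (η f)) 0 :=
    ((hasDerivAt_mul_const _).const_add _).add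
      (hasDerivAt_log_sum_exp_neg_energy_add_smul r θ η)
  linarith [hmin.hasDerivAt_nonneg_of_left one_pos hG]

lemma expFeat_gibbs_mem_convexHull {σ : A → ℝ} {θ : Φ → Fin d → ℝ}
    (hθ : ∀ θ', dualObj r σ θ ≤ dualObj r σ θ') (f : Φ) :
    expFeat r (gibbs r θ) f ∈ convexHull ℝ (range (expFeat r σ)) := by
  classical
  have : Nonempty Φ := ⟨f⟩
  refine mem_convexHull_of_forall_dot_le_supportFn _ fun w => ?_
  set η : Φ → Fin d → ℝ := Pi.single f w
  have key := sum_dot_expFeat_gibbs_le r hθ η (fun g => supportFn (expFeat r σ) (η g))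
    fun t ht g => supportFn_add_smul_le _ (θ g) (η g) ht.1
  rwa [sum_apply_pi_single (fun g => dot (expFeat r (gibbs r θ) g)) (fun g => by simp [dot]),
    sum_apply_pi_single (fun _ => supportFn (expFeat r σ)) (fun _ => supportFn_zero _)] at key

lemma dualObj_le_shannonEntropy_gibbs {σ : A → ℝ} {θ : Φ → Fin d → ℝ}
    (hθ : ∀ θ', dualObj r σ θ ≤ dualObj r σ θ') : dualObj r σ θ ≤ shannonEntropy (gibbs r θ) := by
  have key := sum_dot_expFeat_gibbs_le r hθ (-θ) (fun f => -supportFn (expFeat r σ) (θ f))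
    fun t ht f => by
      rw [Pi.neg_apply, smul_neg, ← sub_eq_add_neg,
        show θ f - t • θ f = (1 - t) • θ f by rw [sub_smul, one_smul],
        supportFn_smul _ (sub_nonneg.2 ht.2)]
      linarith
  simp only [Pi.neg_apply, dot_eq_dotProduct, dotProduct_neg, sum_neg_distrib,
    neg_le_neg_iff] at key
  rw [dualObj_eq, shannonEntropy_gibbs]
  simp only [dot_eq_dotProduct]
  linarith

end Gibbs

theorem maxent_ICE_primal_from_dual_general
    {d : ℕ} {A Φ : Type} [Fintype A] [Nonempty A] [Fintype Φ]
    (r : Φ → A → Fin d → ℝ) (σ : A → ℝ)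
    (θstar : Φ → Fin d → ℝ)
    (hopt : ∀ θ : Φ → Fin d → ℝ, dualObj r σ θstar ≤ dualObj r σ θ)
    (σhat : A → ℝ)
    (hσhatdef : ∀ a, σhat a =
      Real.exp (-∑ f : Φ, dot (r f a) (θstar f)) /
        ∑ a', Real.exp (-∑ f : Φ, dot (r f a') (θstar f))) :
    InICE r σ σhat ∧ ∀ τ : A → ℝ, InICE r σ τ → shannonEntropy τ ≤ shannonEntropy σhat := by
  obtain rfl : σhat = gibbs r θstar := funext hσhatdef
  refine ⟨⟨isProb_softmax _, expFeat_gibbs_mem_convexHull r hopt⟩, fun τ hτ => ?_⟩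
  exact (shannonEntropy_le_dualObj r hτ θstar).trans (dualObj_le_shannonEntropy_gibbs r hopt)

/-- Given optimal dual weights `θ*`, the corresponding Gibbs distribution lies in
the standard ICE polytope and maximizes the Shannon entropy over it. -/
theorem maxent_ICE_primal_from_dual
    {d : ℕ} {A Φ : Type} [Fintype A] [Nonempty A] [Fintype Φ] [Nonempty Φ]
    (r : Φ → A → Fin d → ℝ) (σ : A → ℝ) (hσ : IsProb σ)
    (θstar : Φ → Fin d → ℝ)
    (hopt : ∀ θ : Φ → Fin d → ℝ, dualObj r σ θstar ≤ dualObj r σ θ)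
    (σhat : A → ℝ)
    (hσhatdef : ∀ a, σhat a =
      Real.exp (-∑ f : Φ, dot (r f a) (θstar f)) /
        ∑ a', Real.exp (-∑ f : Φ, dot (r f a') (θstar f))) :
    InICE r σ σhat ∧ ∀ τ : A → ℝ, InICE r σ τ → shannonEntropy τ ≤ shannonEntropy σhat :=
  maxent_ICE_primal_from_dual_general r σ θstar hopt σhat hσhatdef
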